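/- Let u = (u₁,u₂,u₃) : ℝ³ → ℝ³ be a smooth displacement field. Then u satisfies the orthotropic universality constraints — all second-order partial derivatives of u₁ vanish identically except possibly ∂²u₁/∂x₂∂x₃ (i.e., ∂²u₁/∂x₁² = ∂²u₁/∂x₁∂x₂ = ∂²u₁/∂x₁∂x₃ = ∂²u₁/∂x₂² = ∂²u₁/∂x₃² = 0); all second-order partial derivatives of u₂ vanish except possibly ∂²u₂/∂x₁∂x₃; and all second-order partial derivatives of u₃ vanish except possibly ∂²u₃/∂x₁∂x₂ — if and only if there exist a constant real 3×3 matrix A, a vector b ∈ ℝ³, and constants α₁, α₂, α₃ ∈ ℝ such that u(x) = A x + b + (α₁ x₂x₃, α₂ x₁x₃, α₃ x₁x₂) for all x ∈ ℝ³. (This is the characterization of universal displacements of the orthotropic class, which the paper shows persists for the strain-gradient classes 𝔻₂ᵛ, 𝔻₂ and 𝔻₂ ⊕ ℤ₂ᶜ.) -/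

import Mathlib

/-- Partial derivative of a scalar field on `ℝ³` in the `j`-th coordinate direction. -/
noncomputable def pd (j : Fin 3) (f : (Fin 3 → ℝ) → ℝ) : (Fin 3 → ℝ) → ℝ :=
  fun x => fderiv ℝ f x (Pi.single j 1)

/-- The `i`-th component of a vector field on `ℝ³`. -/
def comp (u : (Fin 3 → ℝ) → Fin 3 → ℝ) (i : Fin 3) : (Fin 3 → ℝ) → ℝ :=
  fun x => u x i

/-- Second partial derivative `∂²uᵢ/∂xⱼ∂xₖ` of the `i`-th component of `u`. -/
noncomputable def pdd (j k : Fin 3) (u : (Fin 3 → ℝ) → Fin 3 → ℝ) (i : Fin 3) :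
    (Fin 3 → ℝ) → ℝ :=
  pd j (pd k (comp u i))


lemma contDiff_pd {f : (Fin 3 → ℝ) → ℝ} (hf : ContDiff ℝ (⊤ : ℕ∞) f) (j : Fin 3) :
    ContDiff ℝ (⊤ : ℕ∞) (pd j f) := by
  have h1 : ContDiff ℝ (⊤ : ℕ∞) (fderiv ℝ f) := hf.fderiv_right (by exact_mod_cast le_top)
  exact (ContinuousLinearMap.apply ℝ ℝ (Pi.single j 1)).contDiff.comp h1

lemma pd_eq_snd {f : (Fin 3 → ℝ) → ℝ} (hf : ContDiff ℝ (⊤ : ℕ∞) f) (j k : Fin 3) (x : Fin 3 → ℝ) :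
    pd j (pd k f) x = (fderiv ℝ (fderiv ℝ f) x (Pi.single j 1)) (Pi.single k 1) := by
  have h1 : ContDiff ℝ (⊤ : ℕ∞) (fderiv ℝ f) := hf.fderiv_right (by exact_mod_cast le_top)
  have h2 : HasFDerivAt (fderiv ℝ f) (fderiv ℝ (fderiv ℝ f) x) x :=
    (h1.differentiable (by simp) x).hasFDerivAt
  have h3 : HasFDerivAt (pd k f)
      ((ContinuousLinearMap.apply ℝ ℝ (Pi.single k 1)).comp (fderiv ℝ (fderiv ℝ f) x)) x := by
    have := ((ContinuousLinearMap.apply ℝ ℝ (Pi.single k 1)).hasFDerivAt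
      (x := fderiv ℝ f x)).comp x h2
    exact this
  simp [pd, h3.fderiv]

lemma pd_comm {f : (Fin 3 → ℝ) → ℝ} (hf : ContDiff ℝ (⊤ : ℕ∞) f) (j k : Fin 3) (x : Fin 3 → ℝ) :
    pd j (pd k f) x = pd k (pd j f) x := by
  rw [pd_eq_snd hf, pd_eq_snd hf]
  have h1 : ContDiff ℝ (⊤ : ℕ∞) (fderiv ℝ f) := hf.fderiv_right (by exact_mod_cast le_top)
  exact second_derivative_symmetric
    (fun y => (hf.differentiable (by simp) y).hasFDerivAt)
    ((h1.differentiable (by simp) x).hasFDerivAt) _ _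

lemma clm_expand (L : (Fin 3 → ℝ) →L[ℝ] ℝ) (v : Fin 3 → ℝ) :
    L v = v 0 * L (Pi.single 0 1) + v 1 * L (Pi.single 1 1) + v 2 * L (Pi.single 2 1) := by
  have hv : v = v 0 • (Pi.single 0 1 : Fin 3 → ℝ) + v 1 • (Pi.single 1 1 : Fin 3 → ℝ) + v 2 • (Pi.single 2 1 : Fin 3 → ℝ) := by
    funext j; fin_cases j <;> simp [Pi.single_apply]
  conv_lhs => rw [hv]
  simp [map_add, map_smul]

lemma clm_ext3 {L M : (Fin 3 → ℝ) →L[ℝ] ℝ}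
    (h : ∀ j : Fin 3, L (Pi.single j 1) = M (Pi.single j 1)) : L = M := by
  ext v
  rw [clm_expand L, clm_expand M, h 0, h 1, h 2]

lemma const_of_pd_zero {f : (Fin 3 → ℝ) → ℝ} (hf : ContDiff ℝ (⊤ : ℕ∞) f)
    (h : ∀ j x, pd j f x = 0) (x : Fin 3 → ℝ) : f x = f 0 := by
  apply is_const_of_fderiv_eq_zero (hf.differentiable (by simp))
  intro y
  apply clm_ext3 (M := 0)
  intro j
  simpa [pd] using h j y

lemma affine_of_pdd_zero {g : (Fin 3 → ℝ) → ℝ} (hg : ContDiff ℝ (⊤ : ℕ∞) g)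
    (h : ∀ j k x, pd j (pd k g) x = 0) (x : Fin 3 → ℝ) :
    g x = fderiv ℝ g 0 x + g 0 := by
  have hconst : ∀ y, fderiv ℝ g y = fderiv ℝ g 0 := by
    intro y
    apply clm_ext3
    intro k
    have := const_of_pd_zero (contDiff_pd hg k) (fun j x => h j k x) y
    simpa [pd] using this
  set L := fderiv ℝ g 0 with hL
  have hdiff : Differentiable ℝ g := hg.differentiable (by simp)
  have hzero : ∀ y, fderiv ℝ (fun z => g z - L z) y = 0 := by
    intro y
    rw [fderiv_fun_sub (hdiff y) L.differentiableAt]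
    rw [hconst y, L.fderiv]
    simp
  have hcd : Differentiable ℝ (fun z => g z - L z) := fun y => (hdiff y).sub L.differentiableAt
  have := is_const_of_fderiv_eq_zero hcd hzero x 0
  simp at this
  linarith [this]

noncomputable abbrev prj (j : Fin 3) : (Fin 3 → ℝ) →L[ℝ] ℝ := ContinuousLinearMap.proj j

lemma hasFDerivAt_quadform (L : (Fin 3 → ℝ) →L[ℝ] ℝ) (c β : ℝ) (p q : Fin 3) (x : Fin 3 → ℝ) :
    HasFDerivAt (fun y : Fin 3 → ℝ => L y + c * (y p * y q) + β)
      (L + c • (x p • prj q + x q • prj p)) x := by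
  have h1 : HasFDerivAt (fun y : Fin 3 → ℝ => y p * y q) (x p • prj q + x q • prj p) x :=
    (prj p).hasFDerivAt.mul (prj q).hasFDerivAt
  exact ((L.hasFDerivAt.add (h1.const_mul c)).add_const β)

lemma pd_quadform (L : (Fin 3 → ℝ) →L[ℝ] ℝ) (c β : ℝ) (p q k : Fin 3) (x : Fin 3 → ℝ) :
    pd k (fun y : Fin 3 → ℝ => L y + c * (y p * y q) + β) x
      = L (Pi.single k 1) + c * (x p * (if q = k then 1 else 0) + x q * (if p = k then 1 else 0)) := by
  have h := (hasFDerivAt_quadform L c β p q x).fderiv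
  simp only [pd, h]
  simp [Pi.single_apply, mul_comm]
  split_ifs <;> ring

lemma pd_pd_quadform (L : (Fin 3 → ℝ) →L[ℝ] ℝ) (c β : ℝ) (p q j k : Fin 3) (x : Fin 3 → ℝ) :
    pd j (pd k (fun y : Fin 3 → ℝ => L y + c * (y p * y q) + β)) x
      = c * ((if q = k then 1 else 0) * (if p = j then 1 else 0)
           + (if p = k then 1 else 0) * (if q = j then 1 else 0)) := by
  have hfun : pd k (fun y : Fin 3 → ℝ => L y + c * (y p * y q) + β)
      = fun y : Fin 3 → ℝ =>
          ((c * (if q = k then (1:ℝ) else 0)) • prj p + (c * (if p = k then (1:ℝ) else 0)) • prj q) y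
            + (0:ℝ) * (y p * y q) + L (Pi.single k 1) := by
    funext y
    rw [pd_quadform]
    simp [ContinuousLinearMap.add_apply, ContinuousLinearMap.smul_apply,
      ContinuousLinearMap.proj_apply, ContinuousLinearMap.zero_apply, smul_eq_mul]
    split_ifs <;> simp <;> ring
  rw [hfun, pd_quadform]
  simp [ContinuousLinearMap.add_apply, ContinuousLinearMap.smul_apply,
    ContinuousLinearMap.proj_apply, ContinuousLinearMap.zero_apply, smul_eq_mul,
    Pi.single_apply]
  split_ifs <;> simp_all <;> try ring


lemma pd_const (j : Fin 3) (c : ℝ) (x : Fin 3 → ℝ) : pd j (fun _ => c) x = 0 := by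
  simp [pd]

lemma pd_sub {f h : (Fin 3 → ℝ) → ℝ} {x : Fin 3 → ℝ} (k : Fin 3)
    (hf : DifferentiableAt ℝ f x) (hh : DifferentiableAt ℝ h x) :
    pd k (fun y => f y - h y) x = pd k f x - pd k h x := by
  simp [pd, fderiv_fun_sub hf hh]

lemma top_le : ((⊤ : ℕ∞) : WithTop ℕ∞) ≤ ((⊤ : ℕ∞) : WithTop ℕ∞) := le_rfl

lemma scalar_quad {f : (Fin 3 → ℝ) → ℝ} (hf : ContDiff ℝ (⊤ : ℕ∞) f) (p q : Fin 3)
    (hpq : p ≠ q)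
    (hvanish : ∀ j k : Fin 3, ¬((j = p ∧ k = q) ∨ (j = q ∧ k = p)) →
      ∀ x, pd j (pd k f) x = 0) :
    ∃ (L : (Fin 3 → ℝ) →L[ℝ] ℝ) (c β : ℝ), ∀ x, f x = L x + c * (x p * x q) + β := by
  -- Step 1: α = ∂p∂q f is constant
  have hfq : ContDiff ℝ (⊤ : ℕ∞) (pd q f) := contDiff_pd hf q
  have hfp : ContDiff ℝ (⊤ : ℕ∞) (pd p f) := contDiff_pd hf p
  have hα : ContDiff ℝ (⊤ : ℕ∞) (pd p (pd q f)) := contDiff_pd hfq p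
  have halpha_pd : ∀ (j : Fin 3) (x : Fin 3 → ℝ), pd j (pd p (pd q f)) x = 0 := by
    intro j x
    by_cases hj : j = p
    · subst hj
      have hswap : pd j (pd q f) = pd q (pd j f) := funext (fun y => pd_comm hf j q y)
      rw [hswap, pd_comm (contDiff_pd hf j) j q x]
      have hz : pd j (pd j f) = fun _ => (0:ℝ) :=
        funext (hvanish j j (by rintro (⟨h1, h2⟩ | ⟨h1, h2⟩) <;> exact hpq (h1 ▸ h2 ▸ rfl)))
      rw [hz, pd_const]
    · rw [pd_comm hfq j p x]
      have hz : pd j (pd q f) = fun _ => (0:ℝ) :=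
        funext (hvanish j q (by rintro (⟨h1, h2⟩ | ⟨h1, h2⟩) <;> simp_all))
      rw [hz, pd_const]
  set c := pd p (pd q f) 0 with hc
  have halpha_const : ∀ x, pd p (pd q f) x = c := fun x => const_of_pd_zero hα halpha_pd x
  -- Step 2: g = f - c xₚxq has all second partials zero
  set Q : (Fin 3 → ℝ) → ℝ := fun y => c * (y p * y q) with hQ
  have hQcd : ContDiff ℝ (⊤ : ℕ∞) Q :=
    contDiff_const.mul (((prj p).contDiff).mul ((prj q).contDiff))
  have hQform : Q = fun y : Fin 3 → ℝ =>
      (0 : (Fin 3 → ℝ) →L[ℝ] ℝ) y + c * (y p * y q) + 0 := by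
    funext y; simp [hQ]
  set g : (Fin 3 → ℝ) → ℝ := fun y => f y - Q y with hg
  have hgcd : ContDiff ℝ (⊤ : ℕ∞) g := hf.sub hQcd
  have hdiff : ∀ (h : (Fin 3 → ℝ) → ℝ), ContDiff ℝ (⊤ : ℕ∞) h → Differentiable ℝ h :=
    fun h hh => hh.differentiable (by simp)
  have hpdg : ∀ (k : Fin 3), pd k g = fun x => pd k f x - pd k Q x := by
    intro k; funext x
    exact pd_sub k (hdiff f hf x) (hdiff Q hQcd x)
  have hgz : ∀ j k x, pd j (pd k g) x = 0 := by
    intro j k x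
    rw [hpdg k, pd_sub j (hdiff _ (contDiff_pd hf k) x) (hdiff _ (contDiff_pd hQcd k) x)]
    have hQval : pd j (pd k Q) x
        = c * ((if q = k then 1 else 0) * (if p = j then 1 else 0)
             + (if p = k then 1 else 0) * (if q = j then 1 else 0)) := by
      rw [hQform, pd_pd_quadform]
    rw [hQval]
    by_cases h1 : j = p ∧ k = q
    · obtain ⟨rfl, rfl⟩ := h1
      rw [halpha_const x]
      simp [hpq, Ne.symm hpq]
    · by_cases h2 : j = q ∧ k = p
      · obtain ⟨rfl, rfl⟩ := h2
        rw [pd_comm hf j k x, halpha_const x]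
        simp [hpq, Ne.symm hpq]
      · rw [hvanish j k (by tauto) x]
        push_neg at h1 h2
        split_ifs <;> simp_all
  -- Step 3: g is affine
  refine ⟨fderiv ℝ g 0, c, g 0, fun x => ?_⟩
  have := affine_of_pdd_zero hgcd hgz x
  simp only [hg, hQ] at this ⊢
  linarith [this]


/-- A smooth displacement field `u : ℝ³ → ℝ³` satisfies the orthotropic universality
constraints (all second partials of `u₁` vanish except possibly `∂²u₁/∂x₂∂x₃`, all second
partials of `u₂` vanish except possibly `∂²u₂/∂x₁∂x₃`, and all second partials of `u₃`
vanish except possibly `∂²u₃/∂x₁∂x₂`) if and only if it is the superposition of a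
homogeneous displacement field and the three-parameter field `(α₁x₂x₃, α₂x₁x₃, α₃x₁x₂)`. -/
theorem orthotropic_universal_displacements
    (u : (Fin 3 → ℝ) → Fin 3 → ℝ) (hu : ContDiff ℝ (⊤ : ℕ∞) u) :
    ((∀ x, pdd 0 0 u 0 x = 0) ∧ (∀ x, pdd 0 1 u 0 x = 0) ∧ (∀ x, pdd 0 2 u 0 x = 0) ∧
     (∀ x, pdd 1 1 u 0 x = 0) ∧ (∀ x, pdd 2 2 u 0 x = 0) ∧
     (∀ x, pdd 1 1 u 1 x = 0) ∧ (∀ x, pdd 0 1 u 1 x = 0) ∧ (∀ x, pdd 1 2 u 1 x = 0) ∧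
     (∀ x, pdd 0 0 u 1 x = 0) ∧ (∀ x, pdd 2 2 u 1 x = 0) ∧
     (∀ x, pdd 2 2 u 2 x = 0) ∧ (∀ x, pdd 0 2 u 2 x = 0) ∧ (∀ x, pdd 1 2 u 2 x = 0) ∧
     (∀ x, pdd 0 0 u 2 x = 0) ∧ (∀ x, pdd 1 1 u 2 x = 0)) ↔
    ∃ (A : Matrix (Fin 3) (Fin 3) ℝ) (b : Fin 3 → ℝ) (α₁ α₂ α₃ : ℝ),
      ∀ x, u x = A.mulVec x + b +
        ![α₁ * (x 1 * x 2), α₂ * (x 0 * x 2), α₃ * (x 0 * x 1)] := by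
  have hcomp : ∀ i : Fin 3, ContDiff ℝ (⊤ : ℕ∞) (comp u i) := fun i => contDiff_pi.mp hu i
  constructor
  · rintro ⟨h1, h2, h3, h4, h5, h6, h7, h8, h9, h10, h11, h12, h13, h14, h15⟩
    simp only [pdd] at h1 h2 h3 h4 h5 h6 h7 h8 h9 h10 h11 h12 h13 h14 h15
    obtain ⟨L0, c0, β0, hL0⟩ := scalar_quad (hcomp 0) 1 2 (by decide) (by
      intro j k hjk x
      fin_cases j <;> fin_cases k
      · exact h1 x
      · exact h2 x
      · exact h3 x
      · exact (pd_comm (hcomp 0) 1 0 x).trans (h2 x)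
      · exact h4 x
      · exact absurd (by simp) hjk
      · exact (pd_comm (hcomp 0) 2 0 x).trans (h3 x)
      · exact absurd (by simp) hjk
      · exact h5 x)
    obtain ⟨L1, c1, β1, hL1⟩ := scalar_quad (hcomp 1) 0 2 (by decide) (by
      intro j k hjk x
      fin_cases j <;> fin_cases k
      · exact h9 x
      · exact h7 x
      · exact absurd (by simp) hjk
      · exact (pd_comm (hcomp 1) 1 0 x).trans (h7 x)
      · exact h6 x
      · exact h8 x
      · exact absurd (by simp) hjk
      · exact (pd_comm (hcomp 1) 2 1 x).trans (h8 x)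
      · exact h10 x)
    obtain ⟨L2, c2, β2, hL2⟩ := scalar_quad (hcomp 2) 0 1 (by decide) (by
      intro j k hjk x
      fin_cases j <;> fin_cases k
      · exact h14 x
      · exact absurd (by simp) hjk
      · exact h12 x
      · exact absurd (by simp) hjk
      · exact h15 x
      · exact h13 x
      · exact (pd_comm (hcomp 2) 2 0 x).trans (h12 x)
      · exact (pd_comm (hcomp 2) 2 1 x).trans (h13 x)
      · exact h11 x)
    refine ⟨Matrix.of ![![L0 (Pi.single 0 1), L0 (Pi.single 1 1), L0 (Pi.single 2 1)],
                        ![L1 (Pi.single 0 1), L1 (Pi.single 1 1), L1 (Pi.single 2 1)],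
                        ![L2 (Pi.single 0 1), L2 (Pi.single 1 1), L2 (Pi.single 2 1)]],
            ![β0, β1, β2], c0, c1, c2, fun x => ?_⟩
    funext i
    fin_cases i
    · have := hL0 x
      simp only [comp] at this
      rw [clm_expand L0 x] at this
      simp [Matrix.mulVec, dotProduct, Fin.sum_univ_three, this]
      ring
    · have := hL1 x
      simp only [comp] at this
      rw [clm_expand L1 x] at this
      simp [Matrix.mulVec, dotProduct, Fin.sum_univ_three, this]
      ring
    · have := hL2 x
      simp only [comp] at this
      rw [clm_expand L2 x] at this
      simp [Matrix.mulVec, dotProduct, Fin.sum_univ_three, this]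
      ring
  · rintro ⟨A, b, α₁, α₂, α₃, h⟩
    have hc0 : comp u 0 = fun y : Fin 3 → ℝ =>
        (A 0 0 • prj 0 + A 0 1 • prj 1 + A 0 2 • prj 2) y + α₁ * (y 1 * y 2) + b 0 := by
      funext y
      simp only [comp, h y, Pi.add_apply, Matrix.mulVec, dotProduct,
        Fin.sum_univ_three, ContinuousLinearMap.add_apply, ContinuousLinearMap.smul_apply,
        ContinuousLinearMap.proj_apply, smul_eq_mul, Matrix.cons_val_zero, Matrix.cons_val_one,
        Matrix.head_cons, Matrix.cons_val_two, Matrix.tail_cons]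
      ring
    have hc1 : comp u 1 = fun y : Fin 3 → ℝ =>
        (A 1 0 • prj 0 + A 1 1 • prj 1 + A 1 2 • prj 2) y + α₂ * (y 0 * y 2) + b 1 := by
      funext y
      simp only [comp, h y, Pi.add_apply, Matrix.mulVec, dotProduct,
        Fin.sum_univ_three, ContinuousLinearMap.add_apply, ContinuousLinearMap.smul_apply,
        ContinuousLinearMap.proj_apply, smul_eq_mul, Matrix.cons_val_zero, Matrix.cons_val_one,
        Matrix.head_cons, Matrix.cons_val_two, Matrix.tail_cons]
      ring
    have hc2 : comp u 2 = fun y : Fin 3 → ℝ =>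
        (A 2 0 • prj 0 + A 2 1 • prj 1 + A 2 2 • prj 2) y + α₃ * (y 0 * y 1) + b 2 := by
      funext y
      simp only [comp, h y, Pi.add_apply, Matrix.mulVec, dotProduct,
        Fin.sum_univ_three, ContinuousLinearMap.add_apply, ContinuousLinearMap.smul_apply,
        ContinuousLinearMap.proj_apply, smul_eq_mul, Matrix.cons_val_zero, Matrix.cons_val_one,
        Matrix.head_cons, Matrix.cons_val_two, Matrix.tail_cons]
      ring
    refine ⟨?_, ?_, ?_, ?_, ?_, ?_, ?_, ?_, ?_, ?_, ?_, ?_, ?_, ?_, ?_⟩ <;>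
      intro x <;>
      simp only [pdd, hc0, hc1, hc2] <;>
      rw [pd_pd_quadform] <;>
      simp
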